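/- Let K be a field, V, W vector spaces over K, and R ⊆ V ⊗ V, S ⊆ W ⊗ W subspaces. Let P := TensorAlgebra K (V × W) / J, where J is the two-sided ideal generated by the images of R under v⊗v' ↦ ι(v,0)·ι(v',0) and of S under w⊗w' ↦ ι(0,w)·ι(0,w'). Let i_A : TensorAlgebra K V / (R) → P and i_B : TensorAlgebra K W / (S) → P be the algebra homomorphisms induced by v ↦ (v,0) and w ↦ (0,w) respectively. Then (P, i_A, i_B) is a coproduct in the category of K-algebras: for every K-algebra C and K-algebra homomorphisms f : TensorAlgebra K V / (R) → C and g : TensorAlgebra K W / (S) → C, there exists a unique K-algebra homomorphism h : P → C with h ∘ i_A = f and h ∘ i_B = g. -/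

import Mathlib

open TensorProduct

/-- The linear map `V ⊗ V → T(V)` sending `v ⊗ w` to `ι v * ι w`. -/
noncomputable def quadMap (K V : Type*) [Field K] [AddCommGroup V] [Module K V] :
    V ⊗[K] V →ₗ[K] TensorAlgebra K V :=
  TensorProduct.lift
    ((LinearMap.mul K (TensorAlgebra K V) ∘ₗ TensorAlgebra.ι K).compl₂ (TensorAlgebra.ι K))

/-- The relation whose `RingQuot` is the quadratic algebra `T(V)/(R)`. -/
def quadRel {K V : Type*} [Field K] [AddCommGroup V] [Module K V]
    (R : Submodule K (V ⊗[K] V)) (x y : TensorAlgebra K V) : Prop :=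
  ∃ r ∈ R, x = quadMap K V r ∧ y = 0

/-- The quadratic algebra `T(V)/(R)`. -/
abbrev QuadAlgebraTV {K V : Type*} [Field K] [AddCommGroup V] [Module K V]
    (R : Submodule K (V ⊗[K] V)) : Type _ :=
  RingQuot (quadRel R)

variable {K V W : Type*} [Field K] [AddCommGroup V] [Module K V] [AddCommGroup W] [Module K W]

/-- The relation on `T(V × W)` whose `RingQuot` is the quotient of `T(V × W)` by the
two-sided ideal `J` generated by the images of `R` under `v ⊗ v' ↦ ι(v,0) * ι(v',0)`
and of `S` under `w ⊗ w' ↦ ι(0,w) * ι(0,w')`. -/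
def coprodRel (R : Submodule K (V ⊗[K] V)) (S : Submodule K (W ⊗[K] W))
    (x y : TensorAlgebra K (V × W)) : Prop :=
  (∃ r ∈ R, x = quadMap K (V × W)
      (TensorProduct.map (LinearMap.inl K V W) (LinearMap.inl K V W) r) ∧ y = 0)
  ∨ (∃ s ∈ S, x = quadMap K (V × W)
      (TensorProduct.map (LinearMap.inr K V W) (LinearMap.inr K V W) s) ∧ y = 0)

/-!
`T(V × W)` is the free algebra on `V ⊕ W`, hence the coproduct of `T(V)` and `T(W)`: two algebra
maps out of `T(V)` and `T(W)` glue to one out of `T(V × W)` through the sum of their restrictions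
to the generators. If both factor through `T(V)/(R)` and `T(W)/(S)`, the glued map kills the
generators of `J`, each of which is a product of generators from a single summand, so it descends
to `P`. Uniqueness holds because `P` is generated by the images of `V` and `W`.
-/

namespace RingQuot

variable {R M N A : Type*} [CommSemiring R] [AddCommMonoid M] [Module R M] [AddCommMonoid N]
  [Module R N] [Semiring A] [Algebra R A]

theorem tensorAlgebra_hom_ext {rel : TensorAlgebra R M → TensorAlgebra R M → Prop}
    {h₁ h₂ : RingQuot rel →ₐ[R] A}
    (h : ∀ m, h₁ (mkAlgHom R rel (TensorAlgebra.ι R m)) =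
      h₂ (mkAlgHom R rel (TensorAlgebra.ι R m))) :
    h₁ = h₂ :=
  ringQuot_ext' R h₁ h₂ <| TensorAlgebra.hom_ext <| LinearMap.ext h

theorem tensorAlgebra_prod_hom_ext
    {rel : TensorAlgebra R (M × N) → TensorAlgebra R (M × N) → Prop}
    {h₁ h₂ : RingQuot rel →ₐ[R] A}
    (hl : ∀ m : M, h₁ (mkAlgHom R rel (TensorAlgebra.ι R (m, 0))) =
      h₂ (mkAlgHom R rel (TensorAlgebra.ι R (m, 0))))
    (hr : ∀ n : N, h₁ (mkAlgHom R rel (TensorAlgebra.ι R (0, n))) =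
      h₂ (mkAlgHom R rel (TensorAlgebra.ι R (0, n)))) :
    h₁ = h₂ :=
  tensorAlgebra_hom_ext fun ⟨m, n⟩ => by
    have hsplit : ((m, n) : M × N) = (m, 0) + (0, n) := by simp
    simp only [hsplit, map_add, hl, hr]

end RingQuot

namespace TensorAlgebra

variable {R M N A : Type*} [CommSemiring R] [AddCommMonoid M] [Module R M] [AddCommMonoid N]
  [Module R N] [Semiring A] [Algebra R A]

noncomputable def prodLift (a : TensorAlgebra R M →ₐ[R] A) (b : TensorAlgebra R N →ₐ[R] A) :
    TensorAlgebra R (M × N) →ₐ[R] A :=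
  lift R ((a.toLinearMap ∘ₗ ι R).coprod (b.toLinearMap ∘ₗ ι R))

@[simp]
theorem prodLift_ι_inl (a : TensorAlgebra R M →ₐ[R] A) (b : TensorAlgebra R N →ₐ[R] A) (m : M) :
    prodLift a b (ι R (m, 0)) = a (ι R m) := by
  simp [prodLift]

@[simp]
theorem prodLift_ι_inr (a : TensorAlgebra R M →ₐ[R] A) (b : TensorAlgebra R N →ₐ[R] A) (n : N) :
    prodLift a b (ι R (0, n)) = b (ι R n) := by
  simp [prodLift]

end TensorAlgebra

theorem quadMap_tmul (v w : V) :
    quadMap K V (v ⊗ₜ w) = TensorAlgebra.ι K v * TensorAlgebra.ι K w :=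
  rfl

theorem quadMap_map {C : Type*} [Semiring C] [Algebra K C] (u : V →ₗ[K] W)
    {φ : TensorAlgebra K W →ₐ[K] C} {ψ : TensorAlgebra K V →ₐ[K] C}
    (h : ∀ v, φ (TensorAlgebra.ι K (u v)) = ψ (TensorAlgebra.ι K v)) (x : V ⊗[K] V) :
    φ (quadMap K W (TensorProduct.map u u x)) = ψ (quadMap K V x) := by
  induction x using TensorProduct.induction_on with
  | zero => simp
  | tmul v v' => simp [quadMap_tmul, h]
  | add x y hx hy => simp only [map_add, hx, hy]

theorem mkAlgHom_quadMap_of_mem {R : Submodule K (V ⊗[K] V)} {r : V ⊗[K] V} (hr : r ∈ R) :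
    RingQuot.mkAlgHom K (quadRel R) (quadMap K V r) = 0 := by
  rw [RingQuot.mkAlgHom_rel K ⟨r, hr, rfl, rfl⟩, map_zero]

section Coproduct

variable {C : Type*} [Semiring C] [Algebra K C] {R : Submodule K (V ⊗[K] V)}
  {S : Submodule K (W ⊗[K] W)}

theorem prodLift_respects_coprodRel (f : QuadAlgebraTV R →ₐ[K] C)
    (g : QuadAlgebraTV S →ₐ[K] C) ⦃x y : TensorAlgebra K (V × W)⦄ (hxy : coprodRel R S x y) :
    TensorAlgebra.prodLift (f.comp (RingQuot.mkAlgHom K (quadRel R)))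
        (g.comp (RingQuot.mkAlgHom K (quadRel S))) x =
      TensorAlgebra.prodLift (f.comp (RingQuot.mkAlgHom K (quadRel R)))
        (g.comp (RingQuot.mkAlgHom K (quadRel S))) y := by
  rcases hxy with ⟨r, hr, rfl, rfl⟩ | ⟨s, hs, rfl, rfl⟩
  · rw [quadMap_map (LinearMap.inl K V W) (fun v => TensorAlgebra.prodLift_ι_inl _ _ v),
      map_zero, AlgHom.comp_apply, mkAlgHom_quadMap_of_mem hr, map_zero]
  · rw [quadMap_map (LinearMap.inr K V W) (fun w => TensorAlgebra.prodLift_ι_inr _ _ w),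
      map_zero, AlgHom.comp_apply, mkAlgHom_quadMap_of_mem hs, map_zero]

variable (R S) in
noncomputable def coprodLift (f : QuadAlgebraTV R →ₐ[K] C) (g : QuadAlgebraTV S →ₐ[K] C) :
    RingQuot (coprodRel R S) →ₐ[K] C :=
  RingQuot.liftAlgHom K ⟨_, prodLift_respects_coprodRel f g⟩

@[simp]
theorem coprodLift_mk_ι_inl (f : QuadAlgebraTV R →ₐ[K] C) (g : QuadAlgebraTV S →ₐ[K] C)
    (v : V) :
    coprodLift R S f g (RingQuot.mkAlgHom K _ (TensorAlgebra.ι K (v, 0))) =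
      f (RingQuot.mkAlgHom K _ (TensorAlgebra.ι K v)) := by
  simp [coprodLift]

@[simp]
theorem coprodLift_mk_ι_inr (f : QuadAlgebraTV R →ₐ[K] C) (g : QuadAlgebraTV S →ₐ[K] C)
    (w : W) :
    coprodLift R S f g (RingQuot.mkAlgHom K _ (TensorAlgebra.ι K (0, w))) =
      g (RingQuot.mkAlgHom K _ (TensorAlgebra.ι K w)) := by
  simp [coprodLift]

end Coproduct

/-- `P = T(V × W)/J` together with the maps induced by `v ↦ (v,0)` and
`w ↦ (0,w)` is a coproduct of the quadratic algebras `TV/(R)` and `TW/(S)` in the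
category of `K`-algebras. -/
theorem quadraticAlgebra_coproduct (R : Submodule K (V ⊗[K] V))
    (S : Submodule K (W ⊗[K] W))
    (iA : QuadAlgebraTV R →ₐ[K] RingQuot (coprodRel R S))
    (iB : QuadAlgebraTV S →ₐ[K] RingQuot (coprodRel R S))
    (hiA : ∀ v : V, iA (RingQuot.mkAlgHom K (quadRel R) (TensorAlgebra.ι K v))
      = RingQuot.mkAlgHom K (coprodRel R S) (TensorAlgebra.ι K ((v, 0) : V × W)))
    (hiB : ∀ w : W, iB (RingQuot.mkAlgHom K (quadRel S) (TensorAlgebra.ι K w))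
      = RingQuot.mkAlgHom K (coprodRel R S) (TensorAlgebra.ι K ((0, w) : V × W))) :
    ∀ (C : Type*) [Ring C] [Algebra K C]
      (f : QuadAlgebraTV R →ₐ[K] C) (g : QuadAlgebraTV S →ₐ[K] C),
      ∃! h : RingQuot (coprodRel R S) →ₐ[K] C, h.comp iA = f ∧ h.comp iB = g := by
  intro C _ _ f g
  refine ⟨coprodLift R S f g, ⟨?_, ?_⟩, ?_⟩
  · exact RingQuot.tensorAlgebra_hom_ext fun v => by simp [hiA]
  · exact RingQuot.tensorAlgebra_hom_ext fun w => by simp [hiB]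
  · rintro h ⟨rfl, rfl⟩
    exact RingQuot.tensorAlgebra_prod_hom_ext (fun v => by simp [hiA]) (fun w => by simp [hiB])
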